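/- Let x̃ ∈ {ℓ,u}^n with x̃ not equal to any of the points x^0,…,x^n. Let r be the smallest index j with x̃_j = ℓ, let s be the largest index j with x̃_j = u, and let p be the number of coordinates of x̃ equal to u (so r ≤ p ≤ s−1). Then (x̃, m(x̃)) satisfies a valid core inequality β₀ + Σ_{j=1}^n β_j x_j + β′ y ≥ 0 exactly if and only if (x^p, m(x^p)) satisfies the inequality exactly and β_r = β_{r+1} = … = β_s. -/

import Mathlib

open Finset

/-- The symmetric multilinear polynomial `m(x) = ∑_{i=2}^n c_i ∑_{|J|=i} ∏_{j∈J} x_j`. -/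
noncomputable def mPoly (n : ℕ) (c : ℕ → ℝ) (x : Fin n → ℝ) : ℝ :=
  ∑ i ∈ Finset.Icc 2 n, c i *
    ∑ J ∈ Finset.powersetCard i (Finset.univ : Finset (Fin n)), ∏ j ∈ J, x j

/-- The box `X = [ℓ,u]^n`. -/
def Xbox (n : ℕ) (ℓ u : ℝ) : Set (Fin n → ℝ) :=
  {x | ∀ j, x j ∈ Set.Icc ℓ u}

/-- The graph `G = {(x,y) : x ∈ X, y = m(x)}`. -/
def Gset (n : ℕ) (ℓ u : ℝ) (c : ℕ → ℝ) : Set ((Fin n → ℝ) × ℝ) :=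
  {p | p.1 ∈ Xbox n ℓ u ∧ p.2 = mPoly n c p.1}

/-- The point `x^k` whose first `k` coordinates are `u` and remaining ones are `ℓ`. -/
def xpt (n : ℕ) (ℓ u : ℝ) (k : ℕ) : Fin n → ℝ :=
  fun j => if (j : ℕ) < k then u else ℓ

/-- `m(x^k)`. -/
noncomputable def mval (n : ℕ) (ℓ u : ℝ) (c : ℕ → ℝ) (k : ℕ) : ℝ :=
  mPoly n c (xpt n ℓ u k)

/-- `L_k(β₀,β) = β₀ + u ∑_{j=1}^k β_j + ℓ ∑_{j=k+1}^n β_j`. -/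
noncomputable def Lk (n : ℕ) (ℓ u : ℝ) (β₀ : ℝ) (β : Fin n → ℝ) (k : ℕ) : ℝ :=
  β₀ + u * ∑ j ∈ Finset.univ.filter (fun j : Fin n => (j : ℕ) < k), β j
     + ℓ * ∑ j ∈ Finset.univ.filter (fun j : Fin n => k ≤ (j : ℕ)), β j

/-- The left-hand side `β₀ + ∑_j β_j x_j + β′ y` of an inequality, at the point `p = (x,y)`. -/
noncomputable def ineqLhs (n : ℕ) (β₀ : ℝ) (β : Fin n → ℝ) (β' : ℝ)
    (p : (Fin n → ℝ) × ℝ) : ℝ :=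
  β₀ + ∑ j, β j * p.1 j + β' * p.2

/-- A core inequality: `β′ ∈ {1,-1}` and nondecreasing coefficients `β₁ ≤ … ≤ βₙ`. -/
def IsCore (n : ℕ) (β : Fin n → ℝ) (β' : ℝ) : Prop :=
  (β' = 1 ∨ β' = -1) ∧ Monotone β

/-- Validity of the inequality `β₀ + ∑_j β_j x_j + β′ y ≥ 0` on `conv(G)`. -/
def IsValid (n : ℕ) (ℓ u : ℝ) (c : ℕ → ℝ) (β₀ : ℝ) (β : Fin n → ℝ) (β' : ℝ) : Prop :=
  ∀ p ∈ convexHull ℝ (Gset n ℓ u c), 0 ≤ ineqLhs n β₀ β β' p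

/-- The point `p` satisfies the inequality exactly (with equality). -/
def ExactAt (n : ℕ) (β₀ : ℝ) (β : Fin n → ℝ) (β' : ℝ) (p : (Fin n → ℝ) × ℝ) : Prop :=
  ineqLhs n β₀ β β' p = 0

/-- Facet-defining: there are `n+1` affinely independent points of `conv(G)`
satisfying the inequality exactly. -/
def IsFacet (n : ℕ) (ℓ u : ℝ) (c : ℕ → ℝ) (β₀ : ℝ) (β : Fin n → ℝ) (β' : ℝ) : Prop :=
  ∃ pts : Fin (n + 1) → (Fin n → ℝ) × ℝ,
    AffineIndependent ℝ pts ∧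
    ∀ i, pts i ∈ convexHull ℝ (Gset n ℓ u c) ∧ ExactAt n β₀ β β' (pts i)

/-- The point `(x^k, m(x^k))` of `G`. -/
noncomputable def vtx (n : ℕ) (ℓ u : ℝ) (c : ℕ → ℝ) (k : ℕ) : (Fin n → ℝ) × ℝ :=
  (xpt n ℓ u k, mval n ℓ u c k)

/-!
Let `U` be the set of coordinates where `x̃` equals `u` and `V = {1,…,p}` the one of `x^p`;
both have `p` elements. By symmetry of `m`, `m(x̃) = m(x^p)`, so the left-hand side at
`(x̃, m(x̃))` is the one at `(x^p, m(x^p))` plus `(u - ℓ) (∑_{U∖V} β - ∑_{V∖U} β)`.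
Every index of `V ∖ U` is below every index of `U ∖ V` and the two sets have equal size, so for
monotone `β` the bracket is nonnegative. Both sets lie in `[r, s]`, and if `r ≤ s` then
`r ∈ V ∖ U` and `s ∈ U ∖ V`, so the bracket vanishes iff `β` is constant on `[r, s]`.
As the first summand is nonnegative by validity, the inequality holds with equality at
`(x̃, m(x̃))` iff both summands vanish.
-/

theorem mPoly_comp_perm (n : ℕ) (c : ℕ → ℝ) (x : Fin n → ℝ) (σ : Equiv.Perm (Fin n)) :
    mPoly n c (x ∘ σ) = mPoly n c x := by
  have hval : univ.val.map (x ∘ σ) = univ.val.map x := by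
    rw [← Multiset.map_map]
    congr 1
    simp
  simp only [mPoly, ← Finset.esymm_map_val, hval]

def initSeg (n k : ℕ) : Finset (Fin n) := {j | (j : ℕ) < k}

theorem mem_initSeg {n k : ℕ} {j : Fin n} : j ∈ initSeg n k ↔ (j : ℕ) < k := by
  simp [initSeg]

theorem card_initSeg {n k : ℕ} (hk : k ≤ n) : #(initSeg n k) = k := by
  rw [initSeg, Fin.card_filter_val_lt, min_eq_right hk]

theorem card_initSeg_card {n : ℕ} (U : Finset (Fin n)) : #(initSeg n #U) = #U :=
  card_initSeg (card_le_univ U |>.trans_eq (Fintype.card_fin n))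

theorem xpt_eq_ite (n : ℕ) (ℓ u : ℝ) (k : ℕ) :
    xpt n ℓ u k = fun j => if j ∈ initSeg n k then u else ℓ := by
  simp only [mem_initSeg]
  rfl

theorem mPoly_ite_mem (n : ℕ) (ℓ u : ℝ) (c : ℕ → ℝ) (U : Finset (Fin n)) :
    mPoly n c (fun j => if j ∈ U then u else ℓ) = mval n ℓ u c #U := by
  obtain ⟨σ, hσ⟩ := Equiv.Perm.exists_map_finset_eq U (initSeg n #U) (card_initSeg_card U).symm
  rw [mval, xpt_eq_ite, ← hσ]
  conv_rhs => rw [← mPoly_comp_perm n c _ σ]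
  congr 1
  funext j
  simp

theorem sum_mul_ite_mem {ι : Type*} [Fintype ι] [DecidableEq ι] (β : ι → ℝ) (ℓ u : ℝ)
    (U : Finset ι) :
    ∑ j, β j * (if j ∈ U then u else ℓ) = ℓ * ∑ j, β j + (u - ℓ) * ∑ j ∈ U, β j := by
  have hterm : ∀ j, β j * (if j ∈ U then u else ℓ)
      = ℓ * β j + if j ∈ U then (u - ℓ) * β j else 0 := by
    intro j
    split_ifs <;> ring
  simp only [hterm, sum_add_distrib, sum_ite_mem, univ_inter, mul_sum]

theorem ineqLhs_ite_mem (n : ℕ) (ℓ u : ℝ) (c : ℕ → ℝ) (β₀ : ℝ) (β : Fin n → ℝ) (β' : ℝ)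
    (U : Finset (Fin n)) :
    ineqLhs n β₀ β β' (fun j => if j ∈ U then u else ℓ, mPoly n c fun j => if j ∈ U then u else ℓ)
      = ineqLhs n β₀ β β' (vtx n ℓ u c #U)
        + (u - ℓ) * (∑ j ∈ U, β j - ∑ j ∈ initSeg n #U, β j) := by
  simp only [ineqLhs, vtx, mPoly_ite_mem, xpt_eq_ite, sum_mul_ite_mem]
  ring

theorem vtx_mem_Gset (n : ℕ) {ℓ u : ℝ} (hlu : ℓ ≤ u) (c : ℕ → ℝ) (k : ℕ) :
    vtx n ℓ u c k ∈ Gset n ℓ u c := by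
  refine ⟨fun j => ?_, rfl⟩
  by_cases hj : (j : ℕ) < k <;> simp [vtx, xpt, hj, hlu]

section SumComparison

variable {ι α : Type*} [LinearOrder α] {A B : Finset ι} {f : ι → α}

theorem Finset.sum_le_sum_of_card_eq_of_forall_le [AddCommMonoid α] [IsOrderedAddMonoid α]
    (hcard : #B = #A)
    (hle : ∀ b ∈ B, ∀ a ∈ A, f b ≤ f a) : ∑ b ∈ B, f b ≤ ∑ a ∈ A, f a := by
  rcases A.eq_empty_or_nonempty with rfl | hA
  · rw [card_empty, card_eq_zero] at hcard
    simp [hcard]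
  · calc ∑ b ∈ B, f b ≤ #B • A.inf' hA f :=
          sum_le_card_nsmul _ _ _ fun b hb => le_inf' _ _ (hle b hb)
      _ = #A • A.inf' hA f := by rw [hcard]
      _ ≤ ∑ a ∈ A, f a := card_nsmul_le_sum _ _ _ fun a ha => inf'_le _ ha

theorem Finset.sub_le_sum_sub_sum_of_card_eq [AddCommGroup α] [IsOrderedAddMonoid α]
    [DecidableEq ι] (hcard : #B = #A)
    (hle : ∀ b ∈ B, ∀ a ∈ A, f b ≤ f a) {a b : ι} (ha : a ∈ A) (hb : b ∈ B) :
    f a - f b ≤ ∑ a ∈ A, f a - ∑ b ∈ B, f b := by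
  have hrest : ∑ b ∈ B.erase b, f b ≤ ∑ a ∈ A.erase a, f a :=
    sum_le_sum_of_card_eq_of_forall_le (by rw [card_erase_of_mem ha, card_erase_of_mem hb, hcard])
      fun b' hb' a' ha' => hle b' (mem_of_mem_erase hb') a' (mem_of_mem_erase ha')
  rw [← add_sum_erase A f ha, ← add_sum_erase B f hb, add_sub_add_comm]
  exact le_add_of_nonneg_right (sub_nonneg.2 hrest)

end SumComparison

section InitialSegment

variable {n : ℕ} {U : Finset (Fin n)} {r s : Fin n}

theorem card_sdiff_initSeg (U : Finset (Fin n)) : #(U \ initSeg n #U) = #(initSeg n #U \ U) :=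
  card_sdiff_comm (card_initSeg_card U).symm

theorem le_of_mem_sdiff_initSeg {a b : Fin n} (ha : a ∈ U \ initSeg n #U)
    (hb : b ∈ initSeg n #U \ U) : b ≤ a := by
  have ha' := mem_initSeg.not.1 (mem_sdiff.1 ha).2
  have hb' := mem_initSeg.1 (mem_sdiff.1 hb).1
  exact Fin.le_iff_val_le_val.2 (by omega)

theorem Iio_subset_of_isLeast_compl (hr : IsLeast (↑U)ᶜ r) : Iio r ⊆ U := fun j hj => by
  by_contra hjU
  exact (mem_Iio.1 hj).not_ge (hr.2 hjU)

theorem val_le_card_of_isLeast_compl (hr : IsLeast (↑U)ᶜ r) : (r : ℕ) ≤ #U :=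
  (Fin.card_Iio r).symm.trans_le (card_le_card (Iio_subset_of_isLeast_compl hr))

theorem card_le_val_succ_of_isGreatest (hs : IsGreatest ↑U s) : #U ≤ s + 1 :=
  (card_le_card fun _ hj => mem_Iic.2 (hs.2 hj)).trans_eq (Fin.card_Iic s)

theorem val_lt_card_of_le (hr : IsLeast (↑U)ᶜ r) (hs : IsGreatest ↑U s) (hrs : r ≤ s) :
    (r : ℕ) < #U := by
  have hsr : s ∉ Iio r := by simpa using hrs
  calc (r : ℕ) < #(insert s (Iio r)) := by rw [card_insert_of_notMem hsr, Fin.card_Iio]; omega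
    _ ≤ #U := card_le_card (insert_subset hs.1 (Iio_subset_of_isLeast_compl hr))

theorem card_le_val_of_le (hr : IsLeast (↑U)ᶜ r) (hs : IsGreatest ↑U s) (hrs : r ≤ s) :
    #U ≤ s := by
  have hsub : U ⊆ (Iic s).erase r := fun j hj =>
    mem_erase.2 ⟨ne_of_mem_of_not_mem hj hr.1, mem_Iic.2 (hs.2 hj)⟩
  simpa [card_erase_of_mem (mem_Iic.2 hrs)] using card_le_card hsub

theorem sum_initSeg_card_le_sum {β : Fin n → ℝ} (hβ : Monotone β) (U : Finset (Fin n)) :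
    ∑ j ∈ initSeg n #U, β j ≤ ∑ j ∈ U, β j := by
  rw [← sub_nonneg, ← sum_sdiff_sub_sum_sdiff, sub_nonneg]
  exact sum_le_sum_of_card_eq_of_forall_le (card_sdiff_initSeg U).symm
    fun b hb a ha => hβ (le_of_mem_sdiff_initSeg ha hb)

theorem sum_sub_sum_initSeg_eq_zero_iff {β : Fin n → ℝ} (hβ : Monotone β)
    (hr : IsLeast (↑U)ᶜ r) (hs : IsGreatest ↑U s) :
    ∑ j ∈ U, β j - ∑ j ∈ initSeg n #U, β j = 0 ↔
      ∀ i j : Fin n, r ≤ i → i ≤ s → r ≤ j → j ≤ s → β i = β j := by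
  have hcard := card_sdiff_initSeg U
  have hle : ∀ b ∈ initSeg n #U \ U, ∀ a ∈ U \ initSeg n #U, β b ≤ β a :=
    fun b hb a ha => hβ (le_of_mem_sdiff_initSeg ha hb)
  rw [← sum_sdiff_sub_sum_sdiff]
  constructor
  · intro hzero i j hri his hrj hjs
    have hrs := hri.trans his
    have hrB : r ∈ initSeg n #U \ U :=
      mem_sdiff.2 ⟨mem_initSeg.2 (val_lt_card_of_le hr hs hrs), hr.1⟩
    have hsA : s ∈ U \ initSeg n #U :=
      mem_sdiff.2 ⟨hs.1, fun h => (mem_initSeg.1 h).not_ge (card_le_val_of_le hr hs hrs)⟩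
    have hsr : β s ≤ β r := by
      simpa [hzero] using sub_le_sum_sub_sum_of_card_eq hcard.symm hle hsA hrB
    have hflat : ∀ k, r ≤ k → k ≤ s → β k = β r := fun k hrk hks =>
      le_antisymm ((hβ hks).trans hsr) (hβ hrk)
    rw [hflat i hri his, hflat j hrj hjs]
  · intro hconst
    have hA : ∀ a ∈ U \ initSeg n #U, β a = β r := by
      intro a ha
      have hra : r ≤ a := Fin.le_iff_val_le_val.2 <|
        (val_le_card_of_isLeast_compl hr).trans (not_lt.1 (mem_initSeg.not.1 (mem_sdiff.1 ha).2))
      have has : a ≤ s := hs.2 (mem_sdiff.1 ha).1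
      exact hconst a r hra has le_rfl (hra.trans has)
    have hB : ∀ b ∈ initSeg n #U \ U, β b = β r := by
      intro b hb
      have hrb : r ≤ b := hr.2 (mem_sdiff.1 hb).2
      have hbs : b ≤ s := Fin.le_iff_val_le_val.2 <| Nat.le_of_lt_succ <|
        (mem_initSeg.1 (mem_sdiff.1 hb).1).trans_le (card_le_val_succ_of_isGreatest hs)
      exact hconst b r hrb hbs le_rfl (hrb.trans hbs)
    rw [sum_congr rfl hA, sum_congr rfl hB, sum_const, sum_const, hcard, sub_self]

end InitialSegment

theorem stmt3_general (n : ℕ) (ℓ u : ℝ) (hlu : ℓ < u) (c : ℕ → ℝ)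
    (β₀ : ℝ) (β : Fin n → ℝ) (β' : ℝ)
    (hcore : IsCore n β β') (hvalid : IsValid n ℓ u c β₀ β β')
    (xt : Fin n → ℝ) (hvert : ∀ j, xt j = ℓ ∨ xt j = u)
    (r s : Fin n)
    (hr : IsLeast {j : Fin n | xt j = ℓ} r)
    (hs : IsGreatest {j : Fin n | xt j = u} s)
    (p : ℕ) (hp : p = (Finset.univ.filter (fun j : Fin n => xt j = u)).card) :
    ExactAt n β₀ β β' (xt, mPoly n c xt) ↔
      (ExactAt n β₀ β β' (vtx n ℓ u c p) ∧
        ∀ i j : Fin n, r ≤ i → i ≤ s → r ≤ j → j ≤ s → β i = β j) := by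
  set U : Finset (Fin n) := {j | xt j = u}
  subst hp
  have hxt : xt = fun j => if j ∈ U then u else ℓ := by
    funext j
    rcases hvert j with h | h <;> simp [U, h]
  have hU : IsGreatest ↑U s := by simpa [U] using hs
  have hUc : IsLeast (↑U)ᶜ r := by
    convert hr using 2
    ext j
    have hℓ : xt j ≠ u ↔ xt j = ℓ := ⟨(hvert j).resolve_right, fun h => h ▸ hlu.ne⟩
    simpa [U] using hℓ
  have hE : 0 ≤ ineqLhs n β₀ β β' (vtx n ℓ u c #U) :=
    hvalid _ (subset_convexHull ℝ _ (vtx_mem_Gset n hlu.le c _))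
  have hD : 0 ≤ (u - ℓ) * (∑ j ∈ U, β j - ∑ j ∈ initSeg n #U, β j) :=
    mul_nonneg (sub_nonneg.2 hlu.le) (sub_nonneg.2 (sum_initSeg_card_le_sum hcore.2 U))
  rw [ExactAt, ExactAt, hxt, ineqLhs_ite_mem, add_eq_zero_iff_of_nonneg hE hD,
    mul_eq_zero_iff_left (sub_pos.2 hlu).ne', sum_sub_sum_initSeg_eq_zero_iff hcore.2 hUc hU]

/-- For a vertex `x̃ ∈ {ℓ,u}^n` that is not one of the `x^k`, with `r`
the smallest index with `x̃_j = ℓ`, `s` the largest index with `x̃_j = u`, and `p` the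
number of coordinates equal to `u`: the point `(x̃, m(x̃))` satisfies a valid core
inequality exactly iff `(x^p, m(x^p))` does and `β_r = … = β_s`. -/
theorem stmt3 (n : ℕ) (hn : 2 ≤ n) (ℓ u : ℝ) (hlu : ℓ < u) (c : ℕ → ℝ)
    (β₀ : ℝ) (β : Fin n → ℝ) (β' : ℝ)
    (hcore : IsCore n β β') (hvalid : IsValid n ℓ u c β₀ β β')
    (xt : Fin n → ℝ) (hvert : ∀ j, xt j = ℓ ∨ xt j = u)
    (hnot : ∀ k ≤ n, xt ≠ xpt n ℓ u k)
    (r s : Fin n)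
    (hr : IsLeast {j : Fin n | xt j = ℓ} r)
    (hs : IsGreatest {j : Fin n | xt j = u} s)
    (p : ℕ) (hp : p = (Finset.univ.filter (fun j : Fin n => xt j = u)).card) :
    ExactAt n β₀ β β' (xt, mPoly n c xt) ↔
      (ExactAt n β₀ β β' (vtx n ℓ u c p) ∧
        ∀ i j : Fin n, r ≤ i → i ≤ s → r ≤ j → j ≤ s → β i = β j) :=
  stmt3_general n ℓ u hlu c β₀ β β' hcore hvalid xt hvert r s hr hs p hp
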